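/- Let f and g be transcendental entire functions such that the set of critical points of f∘g is bounded. Suppose moreover that f permutes with its derivative, i.e. f∘f' = f'∘f, and that 0 is a fixed point of f, i.e. f(0) = 0. Then every critical value of f is a Picard exceptional value of g, i.e. for every critical value w of f, the preimage set {z ∈ ℂ : g(z) = w} is finite. -/

import Mathlib

open Filter Topology Bornology

/-- A function is entire if it is complex-differentiable on all of ℂ. -/
def Entire (f : ℂ → ℂ) : Prop := Differentiable ℂ f

/-- A transcendental entire function: entire and not a polynomial. -/
def TranscendentalEntire (f : ℂ → ℂ) : Prop :=
  Differentiable ℂ f ∧ ¬ ∃ p : Polynomial ℂ, ∀ z : ℂ, f z = p.eval z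

/-- The set of asymptotic values of `f`: `w` is an asymptotic value if there is a
curve `γ : ℝ → ℂ` tending to ∞ along which `f` tends to `w`. -/
def AV (f : ℂ → ℂ) : Set ℂ :=
  {w : ℂ | ∃ γ : ℝ → ℂ, Tendsto (fun t => ‖γ t‖) atTop atTop ∧
      Tendsto (fun t => f (γ t)) atTop (𝓝 w)}

/-- The set of critical points of `f`: points where the derivative vanishes. -/
def CP (f : ℂ → ℂ) : Set ℂ := {z : ℂ | deriv f z = 0}

/-- The set of critical values of `f`: images of critical points. -/
def CV (f : ℂ → ℂ) : Set ℂ := {w : ℂ | ∃ z : ℂ, deriv f z = 0 ∧ f z = w}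

theorem TranscendentalEntire.exists_ne {g : ℂ → ℂ} (hg : TranscendentalEntire g) (w : ℂ) :
    ∃ z, g z ≠ w := by
  by_contra! hconst
  exact hg.2 ⟨Polynomial.C w, by simpa using hconst⟩

theorem CV_subset_CP_of_comp_deriv_comm {f : ℂ → ℂ} (hperm : f ∘ deriv f = deriv f ∘ f)
    (hfix : f 0 = 0) : CV f ⊆ CP f := by
  rintro _ ⟨c, hc, rfl⟩
  have := congrFun hperm c
  simp only [Function.comp_apply, hc, hfix] at this
  exact this.symm

theorem setOf_eq_subset_CP_comp {f g : ℂ → ℂ} (hf : Differentiable ℂ f)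
    (hg : Differentiable ℂ g) {w : ℂ} (hw : w ∈ CP f) : {z | g z = w} ⊆ CP (f ∘ g) := by
  intro z hz
  simp only [CP, Set.mem_ofPred_eq] at hz hw ⊢
  rw [deriv_comp z hf.differentiableAt hg.differentiableAt, hz, hw, zero_mul]

/-- A bounded infinite fibre would accumulate somewhere, and the identity theorem would then
force `g` to be constant. -/
theorem Differentiable.finite_setOf_eq_of_isBounded {E : Type*} [NormedAddCommGroup E]
    [NormedSpace ℂ E] [CompleteSpace E] {g : ℂ → E} (hg : Differentiable ℂ g) {w : E}
    (hne : ∃ z, g z ≠ w) (hb : IsBounded {z | g z = w}) : {z | g z = w}.Finite := by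
  by_contra hinf
  obtain ⟨x, -, hx⟩ :=
    Set.Infinite.exists_accPt_of_subset_isCompact hinf hb.isCompact_closure subset_closure
  have hfreq : ∃ᶠ z in 𝓝[≠] x, g z = w := by
    rw [frequently_nhdsWithin_iff]
    exact (accPt_iff_frequently.mp hx).mono fun z hz => ⟨hz.2, hz.1⟩
  have hconst : g = fun _ => w :=
    (Complex.analyticOnNhd_univ_iff_differentiable.mpr hg).eq_of_frequently_eq
      analyticOnNhd_const hfreq
  obtain ⟨z, hz⟩ := hne
  exact hz (congrFun hconst z)

theorem stmt_12 (f g : ℂ → ℂ)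
    (hf : TranscendentalEntire f) (hg : TranscendentalEntire g)
    (hb : IsBounded (CP (f ∘ g)))
    (hperm : f ∘ deriv f = deriv f ∘ f)
    (hfix : f 0 = 0) :
    ∀ w ∈ CV f, {z : ℂ | g z = w}.Finite := by
  intro w hw
  have hwCP : w ∈ CP f := CV_subset_CP_of_comp_deriv_comm hperm hfix hw
  have hfibre : IsBounded {z | g z = w} := hb.subset (setOf_eq_subset_CP_comp hf.1 hg.1 hwCP)
  exact hg.1.finite_setOf_eq_of_isBounded (hg.exists_ne w) hfibre
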